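/- For every integer n ≥ 2 there is no positive linear operator Q : C([0,1]) → C([0,1]) (positive meaning f ≥ 0 implies Qf ≥ 0) such that 𝔅̄ₙ(Qf)(x) = Bₙf(x) for all f ∈ C([0,1]) and all x ∈ [0,1]; i.e. the Bernstein operator admits no decomposition Bₙ = 𝔅̄ₙ ∘ Q with Q a positive linear endomorphism of C([0,1]). -/

import Mathlib

/-!
Test a factorization `Bₙ = 𝔅̄ₙ ∘ Q` against the hat function `φ(t) = max (1 - n t) 0`.
It vanishes at every Bernstein node `k/n` with `k ≥ 1`, so `Bₙ φ (x) = (1 - x)ⁿ`, and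
`H = Q φ ≥ 0` must satisfy, for `0 < x < 1`,
`∫₀¹ t^(nx-1) (1-t)^(n(1-x)-1) H(t) dt = ψ(x) := B(nx, n(1-x)) (1-x)ⁿ`.
The left side is midpoint log-convex in `x` by Cauchy–Schwarz, since its weight depends
exponentially on `x`. But `ψ` is not: Gamma-function values exhibit `l < r` with
`ψ(l) ψ(r) < ψ((l+r)/2)²`, e.g. `(l, r) = ((n-3)/n, (n-1)/n)` for `n ≥ 5`, where the violation
reduces to `2 (n-2) 3ⁿ < (n-3) 4ⁿ`.
-/

open MeasureTheory Finset unitInterval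

/-- The Beta operator of Mühlbach and Lupaş on `C[0,1]`. -/
noncomputable def betaOp (n : ℕ) (f : ℝ → ℝ) (x : ℝ) : ℝ :=
  if x = 0 then f 0
  else if x = 1 then f 1
  else (∫ t in (0:ℝ)..1, t ^ ((n:ℝ) * x - 1) * (1 - t) ^ ((n:ℝ) * (1 - x) - 1) * f t) /
       (∫ t in (0:ℝ)..1, t ^ ((n:ℝ) * x - 1) * (1 - t) ^ ((n:ℝ) * (1 - x) - 1))

noncomputable def bernsteinOp (n : ℕ) (f : ℝ → ℝ) (x : ℝ) : ℝ :=
  ∑ k ∈ Finset.range (n + 1), f ((k : ℝ) / n) * (n.choose k) * x ^ k * (1 - x) ^ (n - k)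

noncomputable def ext01 (f : C(Set.Icc (0:ℝ) 1, ℝ)) : ℝ → ℝ :=
  Set.IccExtend (by norm_num : (0:ℝ) ≤ 1) f

open Real ProbabilityTheory
open scoped Nat

lemma sq_integral_le_integral_mul_integral {α : Type*} [MeasurableSpace α] {μ : Measure α}
    {f g h : α → ℝ} (hf : Integrable f μ) (hg : Integrable g μ) (hh : Integrable h μ)
    (hf0 : ∀ᵐ x ∂μ, 0 ≤ f x) (hh0 : ∀ᵐ x ∂μ, 0 ≤ h x) (hgfh : ∀ᵐ x ∂μ, g x ^ 2 ≤ f x * h x) :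
    (∫ x, g x ∂μ) ^ 2 ≤ (∫ x, f x ∂μ) * ∫ x, h x ∂μ := by
  have hquad : ∀ s : ℝ,
      0 ≤ (∫ x, f x ∂μ) * (s * s) + (-2 * ∫ x, g x ∂μ) * s + ∫ x, h x ∂μ := by
    intro s
    have hint : ∫ x, (f x * (s * s) + -2 * g x * s + h x) ∂μ
        = (∫ x, f x ∂μ) * (s * s) + (-2 * ∫ x, g x ∂μ) * s + ∫ x, h x ∂μ := by
      rw [integral_add (f := fun x => f x * (s * s) + -2 * g x * s)
          ((hf.mul_const _).add ((hg.const_mul _).mul_const _)) hh,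
        integral_add (hf.mul_const _) ((hg.const_mul _).mul_const _), integral_mul_const,
        integral_mul_const, integral_const_mul]
    rw [← hint]
    refine integral_nonneg_of_ae ?_
    filter_upwards [hf0, hh0, hgfh] with x hfx hhx hgx
    rw [Pi.zero_apply]
    rcases hfx.eq_or_lt with hfx | hfx
    · have : g x = 0 := by nlinarith [sq_nonneg (g x)]
      simp [this, ← hfx, hhx]
    · nlinarith [sq_nonneg (f x * s - g x)]
  have := discrim_le_zero hquad
  rw [discrim] at this
  linarith

lemma rpow_add_div_two_sq {x : ℝ} (hx : 0 < x) (p q : ℝ) :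
    (x ^ ((p + q) / 2)) ^ 2 = x ^ p * x ^ q := by
  rw [← Real.rpow_natCast, ← Real.rpow_mul hx.le, ← Real.rpow_add hx]
  norm_num

lemma ofReal_rpow_mul_one_sub_rpow {t : ℝ} (ht : t ∈ Set.Icc (0 : ℝ) 1) (c d : ℝ) :
    ((t ^ c * (1 - t) ^ d : ℝ) : ℂ) = (t : ℂ) ^ (c : ℂ) * (1 - (t : ℂ)) ^ (d : ℂ) := by
  rw [Complex.ofReal_mul, Complex.ofReal_cpow ht.1, Complex.ofReal_cpow (by linarith [ht.2]),
    Complex.ofReal_sub, Complex.ofReal_one]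

lemma intervalIntegrable_rpow_mul_one_sub_rpow {c d : ℝ} (hc : -1 < c) (hd : -1 < d) :
    IntervalIntegrable (fun t : ℝ => t ^ c * (1 - t) ^ d) volume 0 1 := by
  have h := Complex.betaIntegral_convergent (u := c + 1) (v := d + 1)
    (by simp; linarith) (by simp; linarith)
  simp only [add_sub_cancel_right] at h
  rw [intervalIntegrable_iff_integrableOn_Icc_of_le zero_le_one] at h ⊢
  refine IntegrableOn.congr_fun (Integrable.re h) (fun t ht => ?_) measurableSet_Icc
  rw [← ofReal_rpow_mul_one_sub_rpow ht]
  exact Complex.ofReal_re _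

lemma integral_rpow_mul_one_sub_rpow {a b : ℝ} (ha : 0 < a) (hb : 0 < b) :
    ∫ t in (0 : ℝ)..1, t ^ (a - 1) * (1 - t) ^ (b - 1) = beta a b := by
  have h : ((∫ t in (0 : ℝ)..1, t ^ (a - 1) * (1 - t) ^ (b - 1) : ℝ) : ℂ)
      = Complex.betaIntegral a b := by
    rw [← intervalIntegral.integral_ofReal, Complex.betaIntegral]
    refine intervalIntegral.integral_congr fun t ht => ?_
    rw [Set.uIcc_of_le zero_le_one] at ht
    simp only [ofReal_rpow_mul_one_sub_rpow ht]
    push_cast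
    rfl
  rw [beta_eq_betaIntegralReal a b ha hb, ← h, Complex.ofReal_re]

noncomputable def betaMoment (a b : ℝ) (H : ℝ → ℝ) : ℝ :=
  ∫ t in (0 : ℝ)..1, t ^ (a - 1) * (1 - t) ^ (b - 1) * H t

lemma sq_betaMoment_midpoint_le {a₁ b₁ a₂ b₂ : ℝ} (ha₁ : 0 < a₁) (hb₁ : 0 < b₁)
    (ha₂ : 0 < a₂) (hb₂ : 0 < b₂) {H : ℝ → ℝ} (hH : ContinuousOn H (Set.Icc 0 1))
    (hH0 : ∀ t ∈ Set.Icc (0 : ℝ) 1, 0 ≤ H t) :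
    betaMoment ((a₁ + a₂) / 2) ((b₁ + b₂) / 2) H ^ 2
      ≤ betaMoment a₁ b₁ H * betaMoment a₂ b₂ H := by
  have hint : ∀ {a b : ℝ}, 0 < a → 0 < b →
      IntegrableOn (fun t => t ^ (a - 1) * (1 - t) ^ (b - 1) * H t) (Set.Ioo 0 1) := by
    intro a b ha hb
    have h := (intervalIntegrable_rpow_mul_one_sub_rpow (c := a - 1) (d := b - 1)
      (by linarith) (by linarith)).mul_continuousOn (by rwa [Set.uIcc_of_le zero_le_one])
    exact ((intervalIntegrable_iff_integrableOn_Ioo_of_le zero_le_one).1 h)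
  simp only [betaMoment, intervalIntegral.integral_of_le zero_le_one,
    integral_Ioc_eq_integral_Ioo]
  refine sq_integral_le_integral_mul_integral (hint ha₁ hb₁)
    (hint (by positivity) (by positivity)) (hint ha₂ hb₂) ?_ ?_ ?_ <;>
    filter_upwards [ae_restrict_mem measurableSet_Ioo] with t ⟨ht0, ht1⟩
  · have := hH0 t ⟨ht0.le, ht1.le⟩
    positivity
  · have := hH0 t ⟨ht0.le, ht1.le⟩
    positivity
  · refine le_of_eq ?_
    have h1t : 0 < 1 - t := by linarith
    rw [show (a₁ + a₂) / 2 - 1 = ((a₁ - 1) + (a₂ - 1)) / 2 by ring,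
      show (b₁ + b₂) / 2 - 1 = ((b₁ - 1) + (b₂ - 1)) / 2 by ring, mul_pow, mul_pow,
      rpow_add_div_two_sq ht0, rpow_add_div_two_sq h1t]
    ring

lemma betaOp_eq_betaMoment_div {n : ℕ} (hn : 0 < n) (f : ℝ → ℝ) {x : ℝ}
    (hx : x ∈ Set.Ioo (0 : ℝ) 1) :
    betaOp n f x = betaMoment (n * x) (n * (1 - x)) f / beta (n * x) (n * (1 - x)) := by
  have hn' : (0 : ℝ) < n := Nat.cast_pos.2 hn
  rw [betaOp, if_neg hx.1.ne', if_neg hx.2.ne, ← integral_rpow_mul_one_sub_rpow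
    (mul_pos hn' hx.1) (mul_pos hn' (sub_pos.2 hx.2)), betaMoment]

noncomputable def hat (n : ℕ) : C(Set.Icc (0 : ℝ) 1, ℝ) :=
  ⟨fun t => max (1 - n * t) 0, by fun_prop⟩

lemma bernsteinOp_hat (n : ℕ) (x : ℝ) : bernsteinOp n (ext01 (hat n)) x = (1 - x) ^ n := by
  rw [bernsteinOp, Finset.sum_eq_single 0]
  · simp [ext01, hat]
  · intro k hk hk0
    have hkn : k ≤ n := Nat.lt_succ_iff.1 (Finset.mem_range.1 hk)
    have hn : (n : ℝ) ≠ 0 := Nat.cast_ne_zero.2 (by omega)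
    have hk01 : (k : ℝ) / n ∈ Set.Icc (0 : ℝ) 1 :=
      ⟨by positivity, div_le_one_of_le₀ (Nat.cast_le.2 hkn) (Nat.cast_nonneg n)⟩
    have hk1 : (1 : ℝ) ≤ n * (k / n) := by
      rw [mul_div_cancel₀ _ hn]
      exact Nat.one_le_cast.2 (Nat.pos_of_ne_zero hk0)
    simp [ext01, Set.IccExtend_of_mem _ _ hk01, hat, hk1]
  · simp

noncomputable def hatProfile (n : ℕ) (x : ℝ) : ℝ := beta (n * x) (n * (1 - x)) * (1 - x) ^ n

lemma hatProfile_eq_Gamma (n : ℕ) (x : ℝ) :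
    hatProfile n x = Gamma (n * x) * Gamma (n * (1 - x)) / Gamma n * (1 - x) ^ n := by
  rw [hatProfile, beta, show (n : ℝ) * x + n * (1 - x) = n by ring]

lemma Gamma_three_halves : Gamma (3 / 2) = √π / 2 := by
  rw [show (3 / 2 : ℝ) = 1 / 2 + 1 by norm_num, Gamma_add_one (by norm_num), Gamma_one_half_eq]
  ring

lemma Gamma_five_halves : Gamma (5 / 2) = 3 * √π / 4 := by
  rw [show (5 / 2 : ℝ) = 3 / 2 + 1 by norm_num, Gamma_add_one (by norm_num), Gamma_three_halves]
  ring

lemma sq_Gamma_one_third_mul_Gamma_two_thirds :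
    (Gamma (1 / 3) * Gamma (2 / 3)) ^ 2 = 4 * π ^ 2 / 3 := by
  have h := Gamma_mul_Gamma_one_sub (1 / 3)
  rw [show (1 : ℝ) - 1 / 3 = 2 / 3 by norm_num, show π * (1 / 3) = π / 3 by ring,
    sin_pi_div_three] at h
  rw [h, div_pow, div_pow, sq_sqrt zero_le_three]
  ring

lemma hatProfile_two_mul_lt_sq :
    hatProfile 2 (2 / 3) * hatProfile 2 (5 / 6) < hatProfile 2 (3 / 4) ^ 2 := by
  have hπ := sq_sqrt pi_pos.le
  have g43 : Gamma (4 / 3) = Gamma (1 / 3) / 3 := by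
    rw [show (4 / 3 : ℝ) = 1 / 3 + 1 by norm_num, Gamma_add_one (by norm_num)]; ring
  have g53 : Gamma (5 / 3) = 2 * Gamma (2 / 3) / 3 := by
    rw [show (5 / 3 : ℝ) = 2 / 3 + 1 by norm_num, Gamma_add_one (by norm_num)]; ring
  norm_num [hatProfile_eq_Gamma, g43, g53, Gamma_three_halves, Gamma_one_half_eq]
  nlinarith [sq_Gamma_one_third_mul_Gamma_two_thirds, pi_pos]

lemma hatProfile_three_mul_lt_sq :
    hatProfile 3 (1 / 2) * hatProfile 3 (5 / 6) < hatProfile 3 (2 / 3) ^ 2 := by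
  have hπ := sq_sqrt pi_pos.le
  norm_num [hatProfile_eq_Gamma, Real.Gamma_ofNat_eq_factorial, Nat.factorial, Gamma_three_halves,
    Gamma_five_halves, Gamma_one_half_eq]
  nlinarith [pi_lt_d2, pi_pos]

lemma hatProfile_four_mul_lt_sq :
    hatProfile 4 (1 / 2) * hatProfile 4 (3 / 4) < hatProfile 4 (5 / 8) ^ 2 := by
  have hπ := sq_sqrt pi_pos.le
  norm_num [hatProfile_eq_Gamma, Real.Gamma_ofNat_eq_factorial, Nat.factorial, Gamma_three_halves,
    Gamma_five_halves, Gamma_one_half_eq]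
  nlinarith [pi_gt_three, pi_pos]

lemma hatProfile_eq_factorial {n i j : ℕ} {x : ℝ} (hi : n * x = i + 1)
    (hj : n * (1 - x) = j + 1) :
    hatProfile n x = i ! * j ! / (i + j + 1)! * (1 - x) ^ n := by
  have hn : (n : ℝ) = ((i + j + 1 : ℕ) : ℝ) + 1 := by push_cast; linarith
  rw [hatProfile_eq_Gamma, hi, hj, hn, Gamma_nat_eq_factorial, Gamma_nat_eq_factorial,
    Gamma_nat_eq_factorial]

lemma two_mul_mul_three_pow_lt (k : ℕ) : 2 * (k + 3) * 3 ^ (k + 5) < (k + 2) * 4 ^ (k + 5) := by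
  have h := Nat.mul_le_mul_left (k + 3) (Nat.pow_le_pow_left (show 3 ≤ 4 by norm_num) k)
  have h4 : 0 < 4 ^ k := by positivity
  rw [pow_add, pow_add]
  nlinarith

lemma hatProfile_add_five_mul_lt_sq (k : ℕ) :
    hatProfile (k + 5) ((k + 2) / (k + 5)) * hatProfile (k + 5) ((k + 4) / (k + 5))
      < hatProfile (k + 5) ((k + 3) / (k + 5)) ^ 2 := by
  have hN : (k : ℝ) + 5 ≠ 0 := by positivity
  rw [hatProfile_eq_factorial (i := k + 1) (j := 2) (by push_cast; field_simp; ring)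
      (by push_cast; field_simp; ring),
    hatProfile_eq_factorial (i := k + 3) (j := 0) (by push_cast; field_simp; ring)
      (by push_cast; field_simp; ring),
    hatProfile_eq_factorial (i := k + 2) (j := 1) (by push_cast; field_simp; ring)
      (by push_cast; field_simp; ring)]
  have e₁ : 1 - ((k : ℝ) + 4) / (k + 5) = 1 / (k + 5) := by field_simp; ring
  have e₂ : 1 - ((k : ℝ) + 3) / (k + 5) = 2 * (1 / (k + 5)) := by field_simp; ring
  have e₃ : 1 - ((k : ℝ) + 2) / (k + 5) = 3 * (1 / (k + 5)) := by field_simp; ring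
  have f₂ : (k + 2)! = (k + 2) * (k + 1)! := Nat.factorial_succ (k + 1)
  have f₃ : (k + 3)! = (k + 3) * (k + 2)! := Nat.factorial_succ (k + 2)
  rw [e₁, e₂, e₃, mul_pow, mul_pow, f₃, f₂]
  have key : (2 * (k + 3) * 3 ^ (k + 5) : ℝ) < (k + 2) * 4 ^ (k + 5) := by
    exact_mod_cast two_mul_mul_three_pow_lt k
  set u := (1 / ((k : ℝ) + 5)) ^ (k + 5)
  set A : ℝ := (((k + 1)! : ℕ) : ℝ)
  set D : ℝ := (((k + 4)! : ℕ) : ℝ)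
  have hX : 0 < (k + 2) * (A * u / D) ^ 2 := by positivity
  push_cast
  calc _ = 2 * (k + 3) * 3 ^ (k + 5) * ((k + 2) * (A * u / D) ^ 2) := by ring
    _ < (k + 2) * 4 ^ (k + 5) * ((k + 2) * (A * u / D) ^ 2) := by gcongr
    _ = _ := by rw [show (4 : ℝ) = 2 ^ 2 by norm_num, ← pow_mul, mul_comm 2, pow_mul]; ring

lemma exists_hatProfile_mul_lt_sq {n : ℕ} (hn : 2 ≤ n) :
    ∃ l ∈ Set.Ioo (0 : ℝ) 1, ∃ r ∈ Set.Ioo (0 : ℝ) 1,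
      hatProfile n l * hatProfile n r < hatProfile n ((l + r) / 2) ^ 2 :=
  match n, hn with
  | 2, _ => ⟨2 / 3, by norm_num, 5 / 6, by norm_num, by norm_num [hatProfile_two_mul_lt_sq]⟩
  | 3, _ => ⟨1 / 2, by norm_num, 5 / 6, by norm_num, by norm_num [hatProfile_three_mul_lt_sq]⟩
  | 4, _ => ⟨1 / 2, by norm_num, 3 / 4, by norm_num, by norm_num [hatProfile_four_mul_lt_sq]⟩
  | k + 5, _ => by
    have hN : (0 : ℝ) < k + 5 := by positivity
    refine ⟨(k + 2) / (k + 5), ⟨by positivity, by rw [div_lt_one hN]; linarith⟩,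
      (k + 4) / (k + 5), ⟨by positivity, by rw [div_lt_one hN]; linarith⟩, ?_⟩
    convert hatProfile_add_five_mul_lt_sq k using 3
    field_simp
    ring

/-- There is no positive linear operator `Q` on `C[0,1]` with `Bₙ = 𝔅̄ₙ ∘ Q`, `n ≥ 2`. -/
theorem no_positive_factor (n : ℕ) (hn : 2 ≤ n) :
    ¬ ∃ Q : C(Set.Icc (0:ℝ) 1, ℝ) →ₗ[ℝ] C(Set.Icc (0:ℝ) 1, ℝ),
        (∀ f : C(Set.Icc (0:ℝ) 1, ℝ), (∀ t, 0 ≤ f t) → ∀ t, 0 ≤ Q f t) ∧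
        (∀ f : C(Set.Icc (0:ℝ) 1, ℝ), ∀ x ∈ Set.Icc (0:ℝ) 1,
          betaOp n (ext01 (Q f)) x = bernsteinOp n (ext01 f) x) := by
  rintro ⟨Q, hQ_pos, hQ_factor⟩
  have hn' : (0 : ℝ) < n := by positivity
  set H := ext01 (Q (hat n))
  have hH : Continuous H := (Q (hat n)).continuous.Icc_extend'
  have hH0 : ∀ t, 0 ≤ H t := fun t => hQ_pos (hat n) (fun s => le_max_right _ _) _
  have hmoment : ∀ x ∈ Set.Ioo (0 : ℝ) 1,
      betaMoment (n * x) (n * (1 - x)) H = hatProfile n x := by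
    intro x hx
    have h := hQ_factor (hat n) x (Set.Ioo_subset_Icc_self hx)
    rw [betaOp_eq_betaMoment_div (by omega) _ hx, bernsteinOp_hat,
      div_eq_iff (beta_pos (mul_pos hn' hx.1) (mul_pos hn' (sub_pos.2 hx.2))).ne'] at h
    rw [h, hatProfile, mul_comm]
  obtain ⟨l, hl, r, hr, hlt⟩ := exists_hatProfile_mul_lt_sq hn
  have hm : (l + r) / 2 ∈ Set.Ioo (0 : ℝ) 1 :=
    ⟨by linarith [hl.1, hr.1], by linarith [hl.2, hr.2]⟩
  have hcs := sq_betaMoment_midpoint_le (mul_pos hn' hl.1) (mul_pos hn' (sub_pos.2 hl.2))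
    (mul_pos hn' hr.1) (mul_pos hn' (sub_pos.2 hr.2)) hH.continuousOn (fun t _ => hH0 t)
  rw [show ((n : ℝ) * l + n * r) / 2 = n * ((l + r) / 2) by ring,
    show ((n : ℝ) * (1 - l) + n * (1 - r)) / 2 = n * (1 - (l + r) / 2) by ring,
    hmoment l hl, hmoment r hr, hmoment _ hm] at hcs
  exact hcs.not_gt hlt
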